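/- arXiv:math/0307027 — 7 statements merged into one kernel-verified Lean document; each statement's English description precedes it below -/
import Mathlib

section
/- Let c be a nonzero integer and let K, n be natural numbers with 1 ≤ n < 2^K. Then the coefficient of X^n in the formal power series ∑_{k=0}^{K-1} c^k · X^{2^k} · (1 - X^{2^k})⁻¹ over ℤ equals ∑_{k=0}^{v₂(n)} c^k. -/
open PowerSeries

lemma geom_inv_eq (m : ℕ) (hm : 1 ≤ m) :
    PowerSeries.invOfUnit (1 - (PowerSeries.X : PowerSeries ℤ) ^ m) 1
      = PowerSeries.mk (fun i => if m ∣ i then 1 else 0) := by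
  set g : PowerSeries ℤ := PowerSeries.mk (fun i => if m ∣ i then 1 else 0) with hg
  have hcc : PowerSeries.constantCoeff (R := ℤ) (1 - (PowerSeries.X : PowerSeries ℤ) ^ m)
      = ((1 : ℤˣ) : ℤ) := by
    simp [PowerSeries.constantCoeff_X, zero_pow (Nat.one_le_iff_ne_zero.mp hm)]
  have hmul : (1 - (PowerSeries.X : PowerSeries ℤ) ^ m) *
      PowerSeries.invOfUnit (1 - (PowerSeries.X : PowerSeries ℤ) ^ m) 1 = 1 :=
    PowerSeries.mul_invOfUnit _ 1 hcc
  have hmul2 : (1 - (PowerSeries.X : PowerSeries ℤ) ^ m) * g = 1 := by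
    ext i
    rw [sub_mul, one_mul, map_sub]
    rcases le_or_gt m i with h | h
    · obtain ⟨d, rfl⟩ := Nat.exists_eq_add_of_le h
      rw [add_comm, PowerSeries.coeff_X_pow_mul]
      simp only [hg, PowerSeries.coeff_mk]
      have hdvd : m ∣ m + d ↔ m ∣ d := ⟨fun h => (Nat.dvd_add_right dvd_rfl).mp h,
        fun h => Dvd.dvd.add dvd_rfl h⟩
      have hne : m + d ≠ 0 := by omega
      rw [PowerSeries.coeff_one]
      by_cases hd : m ∣ d <;>
        simp [hd, hdvd, hne, Nat.one_le_iff_ne_zero.mp hm]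
    · rw [PowerSeries.coeff_X_pow_mul' , if_neg (not_le.mpr h)]
      have hi : m ∣ i ↔ i = 0 := by
        constructor
        · intro hd
          rcases Nat.eq_zero_or_pos i with h0 | h0
          · exact h0
          · exact absurd (Nat.le_of_dvd h0 hd) (not_le.mpr h)
        · rintro rfl; exact dvd_zero m
      simp only [hg, PowerSeries.coeff_mk, PowerSeries.coeff_one, hi, sub_zero]
  have h3 : g * ((1 - (PowerSeries.X : PowerSeries ℤ) ^ m) *
      PowerSeries.invOfUnit (1 - (PowerSeries.X : PowerSeries ℤ) ^ m) 1) = g * 1 := by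
    rw [hmul]
  rw [← mul_assoc, mul_comm g, hmul2, one_mul, mul_one] at h3
  exact h3

/-- Let `c` be a nonzero integer and `1 ≤ n < 2^K`. The coefficient of
`X^n` in `∑_{k=0}^{K-1} c^k · X^(2^k) · (1 - X^(2^k))⁻¹` over `ℤ` equals
`∑_{k=0}^{v₂ n} c^k`, where the formal inverse is `invOfUnit _ 1` (constant
coefficient `1`) and `v₂ n = padicValNat 2 n`. -/
theorem stmt_1 (c : ℤ) (hc : c ≠ 0) (K n : ℕ) (h1 : 1 ≤ n) (h2 : n < 2 ^ K) :
    PowerSeries.coeff (R := ℤ) n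
      (∑ k ∈ Finset.range K,
        PowerSeries.C (R := ℤ) (c ^ k) * (PowerSeries.X : PowerSeries ℤ) ^ (2 ^ k) *
          PowerSeries.invOfUnit (1 - (PowerSeries.X : PowerSeries ℤ) ^ (2 ^ k)) 1)
    = ∑ k ∈ Finset.range (padicValNat 2 n + 1), c ^ k := by
  have hterm : ∀ k, PowerSeries.coeff (R := ℤ) n
      (PowerSeries.C (R := ℤ) (c ^ k) * (PowerSeries.X : PowerSeries ℤ) ^ (2 ^ k) *
        PowerSeries.invOfUnit (1 - (PowerSeries.X : PowerSeries ℤ) ^ (2 ^ k)) 1)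
      = if 2 ^ k ∣ n then c ^ k else 0 := by
    intro k
    rw [geom_inv_eq (2 ^ k) (Nat.one_le_two_pow), mul_assoc, PowerSeries.coeff_C_mul]
    rcases le_or_gt (2 ^ k) n with h | h
    · obtain ⟨d, rfl⟩ := Nat.exists_eq_add_of_le h
      rw [add_comm, PowerSeries.coeff_X_pow_mul, PowerSeries.coeff_mk]
      have hdvd : 2 ^ k ∣ 2 ^ k + d ↔ 2 ^ k ∣ d := ⟨fun h => (Nat.dvd_add_right dvd_rfl).mp h,
        fun h => Dvd.dvd.add dvd_rfl h⟩
      by_cases hd : 2 ^ k ∣ d <;> simp [hd, hdvd]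
    · rw [PowerSeries.coeff_X_pow_mul', if_neg (not_le.mpr h)]
      have : ¬ 2 ^ k ∣ n := fun hd => absurd (Nat.le_of_dvd h1 hd) (not_le.mpr h)
      simp [this]
  simp only [map_sum, hterm]
  rw [← Finset.sum_filter]
  have hset : (Finset.range K).filter (fun k => 2 ^ k ∣ n)
      = Finset.range (padicValNat 2 n + 1) := by
    ext k
    simp only [Finset.mem_filter, Finset.mem_range]
    have hn0 : n ≠ 0 := by omega
    have hdvd : 2 ^ k ∣ n ↔ k ≤ padicValNat 2 n := padicValNat_dvd_iff_le hn0
    constructor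
    · rintro ⟨-, hd⟩
      have := hdvd.mp hd
      omega
    · intro hk
      have hle : 2 ^ padicValNat 2 n ∣ n := (padicValNat_dvd_iff_le hn0).mpr le_rfl
      have : 2 ^ padicValNat 2 n ≤ n := Nat.le_of_dvd (by omega) hle
      have hvK : padicValNat 2 n < K := by
        by_contra hcon
        push_neg at hcon
        have := Nat.pow_le_pow_right (by norm_num : 1 ≤ 2) hcon
        omega
      exact ⟨by omega, hdvd.mpr (by omega)⟩
  rw [hset]
end

section
/- Let c be a nonzero integer and let K, n be natural numbers with 1 ≤ n < 2^K. Then the coefficient of X^n in the formal power series ∑_{k=0}^{K-1} c^k · X^{2^k} · (1 - X^{2^{k+1}})⁻¹ over ℤ equals c^{v₂(n)}. -/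
open PowerSeries

lemma invGeom (m : ℕ) (hm : 0 < m) :
    PowerSeries.invOfUnit (1 - (PowerSeries.X : PowerSeries ℤ) ^ m) 1 =
      PowerSeries.mk (fun n => if m ∣ n then 1 else 0) := by
  set f : PowerSeries ℤ := 1 - X ^ m with hf
  set g : PowerSeries ℤ := PowerSeries.mk (fun n => if m ∣ n then (1:ℤ) else 0) with hg
  have hconst : constantCoeff f = (1 : ℤˣ) := by
    simp [hf, hm.ne']
  have hfg : f * g = 1 := by
    ext n
    rw [hf, sub_mul, one_mul, map_sub, coeff_X_pow_mul' g m n]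
    rcases eq_or_ne n 0 with rfl | hn
    · simp [hg, hm.ne', (by omega : ¬ m ≤ 0)]
    · rw [PowerSeries.coeff_one, if_neg hn]
      by_cases h : m ≤ n
      · rw [if_pos h]
        have hd : m ∣ n ↔ m ∣ n - m := by
          constructor
          · intro hd; exact (Nat.dvd_sub hd dvd_rfl)
          · intro hd; have := Nat.dvd_add hd (dvd_refl m); rwa [Nat.sub_add_cancel h] at this
        simp only [hg, coeff_mk]
        by_cases hdd : m ∣ n
        · rw [if_pos hdd, if_pos (hd.mp hdd)]; ring
        · rw [if_neg hdd, if_neg (fun hx => hdd (hd.mpr hx))]; ring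
      · rw [if_neg h]
        have : ¬ m ∣ n := fun hd => h (Nat.le_of_dvd (Nat.pos_of_ne_zero hn) hd)
        simp [hg, this]
  have h1 : f * invOfUnit f 1 = 1 := mul_invOfUnit f 1 hconst
  calc invOfUnit f 1 = 1 * invOfUnit f 1 := (one_mul _).symm
    _ = (f * g) * invOfUnit f 1 := by rw [hfg]
    _ = g * (f * invOfUnit f 1) := by ring
    _ = g := by rw [h1, mul_one]

lemma val_eq_of (n k : ℕ) (hn : n ≠ 0) (hd : 2 ^ k ∣ n) (hnd : ¬ 2 ^ (k + 1) ∣ n) :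
    padicValNat 2 n = k := by
  haveI : Fact (Nat.Prime 2) := ⟨Nat.prime_two⟩
  have h1 : k ≤ padicValNat 2 n := (padicValNat_dvd_iff_le hn).mp hd
  have h2 : ¬ (k + 1 ≤ padicValNat 2 n) := fun h =>
    hnd ((padicValNat_dvd_iff_le hn).mpr h)
  omega

/-- Let `c` be a nonzero integer and `1 ≤ n < 2^K`. The coefficient of
`X^n` in `∑_{k=0}^{K-1} c^k · X^(2^k) · (1 - X^(2^(k+1)))⁻¹` over `ℤ` equals
`c ^ v₂ n`, where the formal inverse is `invOfUnit _ 1` (constant coefficient `1`)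
and `v₂ n = padicValNat 2 n`. -/
theorem stmt_3 (c : ℤ) (hc : c ≠ 0) (K n : ℕ) (h1 : 1 ≤ n) (h2 : n < 2 ^ K) :
    PowerSeries.coeff n
      (∑ k ∈ Finset.range K,
        PowerSeries.C (c ^ k) * (PowerSeries.X : PowerSeries ℤ) ^ (2 ^ k) *
          PowerSeries.invOfUnit (1 - (PowerSeries.X : PowerSeries ℤ) ^ (2 ^ (k + 1))) 1)
    = c ^ padicValNat 2 n := by
  have hn0 : n ≠ 0 := by omega
  haveI : Fact (Nat.Prime 2) := ⟨Nat.prime_two⟩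
  set v := padicValNat 2 n with hv
  have key : ∀ k, (2 ^ k ≤ n ∧ 2 ^ (k + 1) ∣ n - 2 ^ k) ↔ v = k := by
    intro k
    constructor
    · rintro ⟨hle, t, ht⟩
      have hn : n = 2 ^ (k + 1) * t + 2 ^ k := by omega
      have hn' : n = 2 ^ k * (2 * t + 1) := by rw [hn, pow_succ]; ring
      refine val_eq_of n k hn0 ⟨2 * t + 1, hn'⟩ ?_
      rintro ⟨s, hs⟩
      rw [hn', pow_succ, mul_assoc] at hs
      have : 2 * t + 1 = 2 * s := Nat.eq_of_mul_eq_mul_left (Nat.pow_pos (by norm_num)) hs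
      omega
    · rintro rfl
      obtain ⟨m, hm⟩ : 2 ^ v ∣ n := hv ▸ pow_padicValNat_dvd
      have hmodd : m % 2 = 1 := by
        rcases Nat.even_or_odd m with he | ho
        · exfalso
          obtain ⟨t, ht⟩ := he
          apply pow_succ_padicValNat_not_dvd (p := 2) hn0
          rw [← hv]
          exact ⟨t, by rw [hm, ht, pow_succ]; ring⟩
        · exact Nat.odd_iff.mp ho
      obtain ⟨s, hs⟩ : Odd m := Nat.odd_iff.mpr hmodd
      have hn' : n = 2 ^ (v + 1) * s + 2 ^ v := by rw [hm, hs, pow_succ]; ring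
      exact ⟨by omega, ⟨s, by omega⟩⟩
  have hterm : ∀ k, PowerSeries.coeff n
      (PowerSeries.C (c ^ k) * (PowerSeries.X : PowerSeries ℤ) ^ (2 ^ k) *
        PowerSeries.invOfUnit (1 - (PowerSeries.X : PowerSeries ℤ) ^ (2 ^ (k + 1))) 1)
      = if v = k then c ^ k else 0 := by
    intro k
    rw [invGeom _ (Nat.pow_pos (by norm_num)), mul_assoc, PowerSeries.coeff_C_mul,
      coeff_X_pow_mul' _ _ n]
    by_cases hvk : v = k
    · obtain ⟨hle, hdvd⟩ := (key k).mpr hvk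
      rw [if_pos hle, if_pos hvk, coeff_mk, if_pos hdvd, mul_one]
    · rw [if_neg hvk]
      by_cases hle : 2 ^ k ≤ n
      · rw [if_pos hle, coeff_mk,
          if_neg (fun hd => hvk ((key k).mp ⟨hle, hd⟩)), mul_zero]
      · rw [if_neg hle, mul_zero]
  rw [map_sum]
  simp only [hterm]
  rw [Finset.sum_ite_eq (Finset.range K) v (fun k => c ^ k)]
  have hvK : v ∈ Finset.range K := by
    have hd : 2 ^ v ≤ n := Nat.le_of_dvd (by omega) (hv ▸ pow_padicValNat_dvd)
    have : 2 ^ v < 2 ^ K := lt_of_le_of_lt hd h2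
    exact Finset.mem_range.mpr ((Nat.pow_lt_pow_iff_right (by norm_num)).mp this)
  rw [if_pos hvK]
end

section
/- Let α, c, d be integers with α ≠ 0 and let K, n be natural numbers with 1 ≤ n < 2^K. Then the coefficient of X^n in the formal power series (1 - X)⁻¹ · ∑_{k=0}^{K-1} α^k · (d·X^{2^k} + c·X^{2^{k+1}}) · (1 + X^{2^k})⁻¹ over ℤ equals ∑_{i=0}^{L(n)-1} α^i · (d if the i-th binary digit of n is 1, else c), where L(n) is the number of binary digits of n. -/
open PowerSeries

private noncomputable def Aux : PowerSeries ℤ := PowerSeries.mk fun _ => 1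

private noncomputable def Baux (m : ℕ) : PowerSeries ℤ :=
  PowerSeries.mk fun j => if m ∣ j then (-1 : ℤ) ^ (j / m) else 0

private lemma one_sub_X_mul_Aux : (1 - (X : PowerSeries ℤ)) * Aux = 1 := by
  ext n
  cases n with
  | zero => simp [Aux]
  | succ n => simp [Aux, sub_mul, coeff_succ_X_mul, coeff_one]

private lemma invA : PowerSeries.invOfUnit (1 - (X : PowerSeries ℤ)) 1 = Aux := by
  have h : constantCoeff (R := ℤ) (1 - X) = ((1 : ℤˣ) : ℤ) := by simp
  have h2 := PowerSeries.mul_invOfUnit (1 - (X : PowerSeries ℤ)) 1 h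
  calc PowerSeries.invOfUnit (1 - (X : PowerSeries ℤ)) 1
      = ((1 - X) * Aux) * PowerSeries.invOfUnit (1 - (X : PowerSeries ℤ)) 1 := by
        rw [one_sub_X_mul_Aux, one_mul]
    _ = Aux * ((1 - X) * PowerSeries.invOfUnit (1 - (X : PowerSeries ℤ)) 1) := by ring
    _ = Aux := by rw [h2, mul_one]

private lemma one_add_pow_mul_Baux (m : ℕ) (hm : 0 < m) :
    (1 + (X : PowerSeries ℤ) ^ m) * Baux m = 1 := by
  ext n
  rw [add_mul, one_mul, map_add, coeff_X_pow_mul', coeff_one]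
  rcases Nat.eq_zero_or_pos n with rfl | hn
  · simp [Baux, hm.ne']
  · simp only [Baux, coeff_mk, hn.ne', if_false]
    rcases le_or_gt m n with hle | hlt
    · rw [if_pos hle]
      by_cases hd : m ∣ n
      · have hd' : m ∣ n - m := (Nat.dvd_sub hd dvd_rfl)
        rw [if_pos hd, if_pos hd']
        have hq : 1 ≤ n / m := (Nat.one_le_div_iff hm).mpr hle
        have hsub : (n - m) / m = n / m - 1 := by
          have := Nat.div_eq_sub_div hm hle; omega
        obtain ⟨r, hr⟩ : ∃ r, n / m = r + 1 := ⟨n / m - 1, by omega⟩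
        rw [hsub, hr, Nat.add_sub_cancel, pow_succ]
        ring
      · have hd' : ¬ m ∣ n - m := by
          intro h; exact hd (by have := Nat.dvd_add h (dvd_refl m); rwa [Nat.sub_add_cancel hle] at this)
        rw [if_neg hd, if_neg hd', add_zero]
    · rw [if_neg (not_le.mpr hlt), add_zero, if_neg]
      intro hd
      exact absurd (Nat.le_of_dvd hn hd) (not_le.mpr hlt)

private lemma invB (m : ℕ) (hm : 0 < m) :
    PowerSeries.invOfUnit (1 + (X : PowerSeries ℤ) ^ m) 1 = Baux m := by
  have h : constantCoeff (R := ℤ) (1 + X ^ m) = ((1 : ℤˣ) : ℤ) := by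
    simp [PowerSeries.constantCoeff_X, hm.ne']
  have h2 := PowerSeries.mul_invOfUnit (1 + (X : PowerSeries ℤ) ^ m) 1 h
  calc PowerSeries.invOfUnit (1 + (X : PowerSeries ℤ) ^ m) 1
      = ((1 + X ^ m) * Baux m) * PowerSeries.invOfUnit (1 + (X : PowerSeries ℤ) ^ m) 1 := by
        rw [one_add_pow_mul_Baux m hm, one_mul]
    _ = Baux m * ((1 + X ^ m) * PowerSeries.invOfUnit (1 + (X : PowerSeries ℤ) ^ m) 1) := by ring
    _ = Baux m := by rw [h2, mul_one]

private lemma coeff_Aux_mul_Baux (m : ℕ) (hm : 0 < m) (n : ℕ) :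
    PowerSeries.coeff (R := ℤ) n (Aux * Baux m) = if n / m % 2 = 0 then 1 else 0 := by
  have hsum : ∀ n, PowerSeries.coeff (R := ℤ) n (Aux * Baux m)
      = ∑ j ∈ Finset.range (n + 1), PowerSeries.coeff (R := ℤ) j (Baux m) := by
    intro n
    rw [PowerSeries.coeff_mul,
      Finset.Nat.sum_antidiagonal_eq_sum_range_succ
        (fun a b => PowerSeries.coeff (R := ℤ) a Aux * PowerSeries.coeff (R := ℤ) b (Baux m))]
    rw [← Finset.sum_range_reflect (fun j => PowerSeries.coeff (R := ℤ) j (Baux m)) (n + 1)]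
    apply Finset.sum_congr rfl
    intro i hi
    simp [Aux]
  induction n with
  | zero =>
    rw [hsum]
    simp [Baux]
  | succ n ih =>
    rw [hsum, Finset.sum_range_succ, ← hsum, ih]
    simp only [Baux, coeff_mk]
    by_cases hd : m ∣ (n + 1)
    · have hstep : (n + 1) / m = n / m + 1 := by rw [Nat.succ_div, if_pos hd]
      rw [if_pos hd, hstep]
      rcases Nat.even_or_odd (n / m) with he | ho
      · have h0 : n / m % 2 = 0 := Nat.even_iff.mp he
        rw [if_pos h0, if_neg (by omega), Odd.neg_one_pow (Even.add_one he)]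
        ring
      · have h1 : n / m % 2 = 1 := Nat.odd_iff.mp ho
        rw [if_neg (by omega), if_pos (by omega), Even.neg_one_pow (Odd.add_one ho)]
        ring
    · have hstep : (n + 1) / m = n / m := by rw [Nat.succ_div, if_neg hd]; omega
      rw [if_neg hd, add_zero, hstep]

private lemma key (a dd cc : ℤ) (k n : ℕ) :
    PowerSeries.coeff (R := ℤ) n
      (Aux * (PowerSeries.C (R := ℤ) a *
        (PowerSeries.C (R := ℤ) dd * (X : PowerSeries ℤ) ^ (2 ^ k) +
          PowerSeries.C (R := ℤ) cc * (X : PowerSeries ℤ) ^ (2 ^ (k + 1))) * Baux (2 ^ k)))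
      = if k < Nat.size n then a * (if n.testBit k then dd else cc) else 0 := by
  set m := 2 ^ k with hmdef
  have hm : 0 < m := Nat.two_pow_pos k
  have hX2 : (X : PowerSeries ℤ) ^ (2 ^ (k + 1)) = X ^ m * X ^ m := by
    rw [← pow_add]
    congr 1
    rw [hmdef, pow_succ]
    omega
  have hre : Aux * (PowerSeries.C (R := ℤ) a *
        (PowerSeries.C (R := ℤ) dd * (X : PowerSeries ℤ) ^ m +
          PowerSeries.C (R := ℤ) cc * ((X : PowerSeries ℤ) ^ m * X ^ m)) * Baux m)
      = PowerSeries.C (R := ℤ) (a * dd) * (X ^ m * (Aux * Baux m)) +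
        PowerSeries.C (R := ℤ) (a * cc) * (X ^ m * (X ^ m * (Aux * Baux m))) := by
    rw [map_mul, map_mul]
    ring
  rw [hX2, hre, map_add, coeff_C_mul, coeff_C_mul]
  simp only [coeff_X_pow_mul', coeff_Aux_mul_Baux m hm]
  have hsize : k < Nat.size n ↔ m ≤ n := Nat.lt_size
  have htb : n.testBit k = decide (n / m % 2 = 1) := Nat.testBit_eq_decide_div_mod_eq
  rcases le_or_gt m n with hle | hlt
  · have hq1 : 1 ≤ n / m := (Nat.one_le_div_iff hm).mpr hle
    have e1 : n / m = (n - m) / m + 1 := Nat.div_eq_sub_div hm hle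
    rw [if_pos hle, if_pos hle, if_pos (hsize.mpr hle)]
    by_cases hodd : n / m % 2 = 1
    · have h0 : (n - m) / m % 2 = 0 := by omega
      rw [if_pos h0]
      by_cases h2m : m ≤ n - m
      · have e2 : (n - m) / m = (n - m - m) / m + 1 := Nat.div_eq_sub_div hm h2m
        rw [if_pos h2m, if_neg (by omega)]
        simp only [htb, hodd, decide_true, if_true]
        ring
      · rw [if_neg h2m]
        simp only [htb, hodd, decide_true, if_true]
        ring
    · have h1 : (n - m) / m % 2 = 1 := by omega
      rw [if_neg (by omega)]
      have hq2 : 2 ≤ n / m := by omega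
      have h2m : m ≤ n - m := by
        have h2m' : 2 * m ≤ n := (Nat.le_div_iff_mul_le hm).mp hq2
        omega
      have e2 : (n - m) / m = (n - m - m) / m + 1 := Nat.div_eq_sub_div hm h2m
      rw [if_pos h2m, if_pos (by omega)]
      simp only [htb, hodd, decide_false, Bool.false_eq_true, if_false]
      ring
  · rw [if_neg (not_le.mpr hlt), if_neg (not_le.mpr hlt), if_neg (by rw [hsize]; omega)]
    ring

/-- Let `α, c, d` be integers with `α ≠ 0` and `1 ≤ n < 2^K`. The
coefficient of `X^n` in
`(1 - X)⁻¹ · ∑_{k=0}^{K-1} α^k · (d·X^(2^k) + c·X^(2^(k+1))) · (1 + X^(2^k))⁻¹`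
over `ℤ` equals `∑_{i=0}^{L(n)-1} α^i * (d if the i-th binary digit of n is 1 else c)`,
where `L n = Nat.size n` and the formal inverses are `invOfUnit _ 1`. -/
theorem stmt_6 (α c d : ℤ) (hα : α ≠ 0) (K n : ℕ) (h1 : 1 ≤ n) (h2 : n < 2 ^ K) :
    PowerSeries.coeff (R := ℤ) n
      (PowerSeries.invOfUnit (1 - (PowerSeries.X : PowerSeries ℤ)) 1 *
        ∑ k ∈ Finset.range K,
          PowerSeries.C (R := ℤ) (α ^ k) *
            (PowerSeries.C (R := ℤ) d * (PowerSeries.X : PowerSeries ℤ) ^ (2 ^ k) +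
              PowerSeries.C (R := ℤ) c * (PowerSeries.X : PowerSeries ℤ) ^ (2 ^ (k + 1))) *
            PowerSeries.invOfUnit (1 + (PowerSeries.X : PowerSeries ℤ) ^ (2 ^ k)) 1)
    = ∑ i ∈ Finset.range (Nat.size n), α ^ i * (if n.testBit i then d else c) := by
  rw [invA, Finset.mul_sum, map_sum]
  have hterm : ∀ k ∈ Finset.range K,
      PowerSeries.coeff (R := ℤ) n
        (Aux * (PowerSeries.C (R := ℤ) (α ^ k) *
          (PowerSeries.C (R := ℤ) d * (PowerSeries.X : PowerSeries ℤ) ^ (2 ^ k) +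
            PowerSeries.C (R := ℤ) c * (PowerSeries.X : PowerSeries ℤ) ^ (2 ^ (k + 1))) *
          PowerSeries.invOfUnit (1 + (PowerSeries.X : PowerSeries ℤ) ^ (2 ^ k)) 1))
      = if k < Nat.size n then α ^ k * (if n.testBit k then d else c) else 0 := by
    intro k _
    rw [invB (2 ^ k) (Nat.two_pow_pos k)]
    exact key (α ^ k) d c k n
  rw [Finset.sum_congr rfl hterm, ← Finset.sum_filter]
  congr 1
  ext x
  simp only [Finset.mem_filter, Finset.mem_range]
  have hK : Nat.size n ≤ K := Nat.size_le.mpr h2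
  omega
end

section
/- Let K, n be natural numbers with n < 2^K. Then the coefficient of X^n in the formal power series (1 - X)⁻¹ · ∑_{k=0}^{K-1} X^{2^k} · (1 + X^{2^k})⁻¹ over ℤ equals e₁(n). -/
open PowerSeries

/-- The number of ones in the binary representation of `n` (with `e₁ 0 = 0`). -/
def binaryOnes (n : ℕ) : ℕ := (Nat.digits 2 n).count 1

private noncomputable def geomOne : PowerSeries ℤ := PowerSeries.mk fun _ => 1

private noncomputable def altSeries (m : ℕ) : PowerSeries ℤ :=
  PowerSeries.mk fun n => if m ∣ n then (-1 : ℤ) ^ (n / m) else 0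

private lemma myInvUnique {φ a b : PowerSeries ℤ} (ha : φ * a = 1) (hb : φ * b = 1) : a = b := by
  calc a = a * (φ * b) := by rw [hb, mul_one]
  _ = (φ * a) * b := by ring
  _ = b := by rw [ha, one_mul]

private lemma one_sub_X_mul_geom : (1 - (X : PowerSeries ℤ)) * geomOne = 1 := by
  ext n
  rcases n with _ | n
  · simp [geomOne, map_sub, map_mul]
  · rw [sub_mul, one_mul, map_sub, PowerSeries.coeff_succ_X_mul]
    simp [geomOne, PowerSeries.coeff_mk, PowerSeries.coeff_one]

private lemma inv_one_sub_X :
    PowerSeries.invOfUnit (1 - (X : PowerSeries ℤ)) 1 = geomOne := by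
  refine myInvUnique (PowerSeries.mul_invOfUnit _ 1 ?_) one_sub_X_mul_geom
  simp

private lemma one_add_Xpow_mul_alt (m : ℕ) (hm : m ≠ 0) :
    (1 + (X : PowerSeries ℤ) ^ m) * altSeries m = 1 := by
  have hm0 : 0 < m := Nat.pos_of_ne_zero hm
  ext n
  rw [add_mul, one_mul, map_add, mul_comm ((X : PowerSeries ℤ) ^ m),
    PowerSeries.coeff_mul_X_pow']
  rcases eq_or_ne n 0 with rfl | hn
  · rw [if_neg (by omega)]
    simp [altSeries, PowerSeries.coeff_mk, PowerSeries.coeff_one]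
  · rw [PowerSeries.coeff_one, if_neg hn]
    simp only [altSeries, PowerSeries.coeff_mk]
    by_cases hmn : m ≤ n
    · rw [if_pos hmn]
      by_cases hd : m ∣ n
      · obtain ⟨j, rfl⟩ := hd
        have hj : 1 ≤ j := by
          rcases Nat.eq_zero_or_pos j with rfl | h
          · simp at hn
          · exact h
        have h1 : m * j - m = m * (j - 1) := by
          rw [Nat.mul_sub, mul_one]
        have h2 : m * j / m = j := Nat.mul_div_cancel_left j hm0
        have h3 : m ∣ m * j - m := by rw [h1]; exact Dvd.intro _ rfl
        have h4 : (m * j - m) / m = j - 1 := by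
          rw [h1, Nat.mul_div_cancel_left _ hm0]
        obtain ⟨e, rfl⟩ : ∃ e, j = e + 1 := ⟨j - 1, by omega⟩
        rw [if_pos (Dvd.intro _ rfl), if_pos h3, h2, h4]
        simp [pow_succ]
      · have hd' : ¬ m ∣ n - m := fun h => hd (by
          have := Nat.dvd_add h (dvd_refl m)
          rwa [Nat.sub_add_cancel hmn] at this)
        simp [hd, hd']
    · rw [if_neg hmn]
      have : ¬ m ∣ n := fun hd => hmn (Nat.le_of_dvd (Nat.pos_of_ne_zero hn) hd)
      simp [this]

private lemma inv_one_add_Xpow (m : ℕ) (hm : m ≠ 0) :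
    PowerSeries.invOfUnit (1 + (X : PowerSeries ℤ) ^ m) 1 = altSeries m := by
  refine myInvUnique (PowerSeries.mul_invOfUnit _ 1 ?_) (one_add_Xpow_mul_alt m hm)
  simp [zero_pow hm]

private lemma coeff_Xpow_mul_alt (m : ℕ) (hm : m ≠ 0) (i : ℕ) :
    PowerSeries.coeff (R := ℤ) i ((X : PowerSeries ℤ) ^ m * altSeries m)
      = if m ∣ i ∧ i ≠ 0 then (-1 : ℤ) ^ (i / m - 1) else 0 := by
  have hm0 : 0 < m := Nat.pos_of_ne_zero hm
  rw [mul_comm, PowerSeries.coeff_mul_X_pow']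
  by_cases hmn : m ≤ i
  · rw [if_pos hmn]
    simp only [altSeries, PowerSeries.coeff_mk]
    by_cases hd : m ∣ i
    · obtain ⟨j, rfl⟩ := hd
      have h1 : m * j - m = m * (j - 1) := by rw [Nat.mul_sub, mul_one]
      have h3 : m ∣ m * j - m := by rw [h1]; exact Dvd.intro _ rfl
      have h4 : (m * j - m) / m = j - 1 := by rw [h1, Nat.mul_div_cancel_left _ hm0]
      have h2 : m * j / m = j := Nat.mul_div_cancel_left j hm0
      rw [if_pos h3, h4, if_pos ⟨Dvd.intro _ rfl, by omega⟩, h2]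
    · have hd' : ¬ m ∣ i - m := fun h => hd (by
        have := Nat.dvd_add h (dvd_refl m)
        rwa [Nat.sub_add_cancel hmn] at this)
      simp [hd, hd']
  · rw [if_neg hmn]
    have : ¬ (m ∣ i ∧ i ≠ 0) := by
      rintro ⟨hd, hi⟩; exact hmn (Nat.le_of_dvd (Nat.pos_of_ne_zero hi) hd)
    rw [if_neg this]

private lemma alt_partial_sum (m : ℕ) (hm : m ≠ 0) (n : ℕ) :
    (∑ i ∈ Finset.range (n + 1),
      if m ∣ i ∧ i ≠ 0 then (-1 : ℤ) ^ (i / m - 1) else 0) = ((n / m) % 2 : ℕ) := by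
  induction n with
  | zero => simp
  | succ n ih =>
    rw [Finset.sum_range_succ, ih, Nat.succ_div]
    by_cases hd : m ∣ n + 1
    · rw [if_pos hd, if_pos ⟨hd, Nat.succ_ne_zero n⟩]
      rw [Nat.add_sub_cancel]
      rcases Nat.even_or_odd (n / m) with h | h
      · have h0 : n / m % 2 = 0 := Nat.even_iff.1 h
        have h1 : (n / m + 1) % 2 = 1 := by omega
        rw [h.neg_one_pow, h0, h1]; norm_num
      · have h0 : n / m % 2 = 1 := Nat.odd_iff.1 h
        have h1 : (n / m + 1) % 2 = 0 := by omega
        rw [h.neg_one_pow, h0, h1]; norm_num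
    · rw [if_neg hd, if_neg (fun h => hd h.1)]
      simp

private lemma binaryOnes_eq_sum (K : ℕ) : ∀ n < 2 ^ K,
    binaryOnes n = ∑ k ∈ Finset.range K, n / 2 ^ k % 2 := by
  induction K with
  | zero => intro n hn; interval_cases n; simp [binaryOnes]
  | succ K ih =>
    intro n hn
    rcases eq_or_ne n 0 with rfl | hn0
    · simp [binaryOnes]
    · have hrec : Nat.digits 2 n = n % 2 :: Nat.digits 2 (n / 2) :=
        Nat.digits_def' (by norm_num) (Nat.pos_of_ne_zero hn0)
      have hn' : n < 2 ^ K * 2 := by rw [pow_succ] at hn; exact hn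
      have hdiv : n / 2 < 2 ^ K := by omega
      have hih := ih (n / 2) hdiv
      rw [Finset.sum_range_succ']
      simp only [pow_succ, pow_zero, Nat.div_one]
      have hre : ∀ k, n / (2 ^ k * 2) = (n / 2) / 2 ^ k := by
        intro k; rw [mul_comm, Nat.div_div_eq_div_mul, mul_comm]
      unfold binaryOnes
      rw [hrec, List.count_cons]
      simp only [hre]
      rw [← hih]
      unfold binaryOnes
      rcases Nat.mod_two_eq_zero_or_one n with h | h <;> simp [h]

/-- For `n < 2^K`, the coefficient of `X^n` in
`(1 - X)⁻¹ · ∑_{k=0}^{K-1} X^(2^k) · (1 + X^(2^k))⁻¹` over `ℤ` equals `e₁ n`,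
where the formal inverses are `invOfUnit _ 1`. -/
theorem stmt_8 (K n : ℕ) (h2 : n < 2 ^ K) :
    PowerSeries.coeff (R := ℤ) n
      (PowerSeries.invOfUnit (1 - (PowerSeries.X : PowerSeries ℤ)) 1 *
        ∑ k ∈ Finset.range K,
          (PowerSeries.X : PowerSeries ℤ) ^ (2 ^ k) *
            PowerSeries.invOfUnit (1 + (PowerSeries.X : PowerSeries ℤ) ^ (2 ^ k)) 1)
    = (binaryOnes n : ℤ) := by
  rw [inv_one_sub_X, mul_comm]
  have hS : ∀ φ : PowerSeries ℤ,
      PowerSeries.coeff (R := ℤ) n (φ * geomOne)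
        = ∑ i ∈ Finset.range (n + 1), PowerSeries.coeff (R := ℤ) i φ := by
    intro φ
    rw [PowerSeries.coeff_mul, Finset.Nat.sum_antidiagonal_eq_sum_range_succ_mk]
    simp [geomOne, PowerSeries.coeff_mk]
  rw [hS]
  have : ∀ i ∈ Finset.range (n + 1),
      PowerSeries.coeff (R := ℤ) i
        (∑ k ∈ Finset.range K,
          (PowerSeries.X : PowerSeries ℤ) ^ (2 ^ k) *
            PowerSeries.invOfUnit (1 + (PowerSeries.X : PowerSeries ℤ) ^ (2 ^ k)) 1)
      = ∑ k ∈ Finset.range K,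
          (if 2 ^ k ∣ i ∧ i ≠ 0 then (-1 : ℤ) ^ (i / 2 ^ k - 1) else 0) := by
    intro i _
    rw [map_sum]
    refine Finset.sum_congr rfl fun k _ => ?_
    rw [inv_one_add_Xpow _ (by positivity), coeff_Xpow_mul_alt _ (by positivity)]
  rw [Finset.sum_congr rfl this, Finset.sum_comm]
  have : ∀ k ∈ Finset.range K,
      (∑ i ∈ Finset.range (n + 1),
        if 2 ^ k ∣ i ∧ i ≠ 0 then (-1 : ℤ) ^ (i / 2 ^ k - 1) else 0)
      = ((n / 2 ^ k % 2 : ℕ) : ℤ) := fun k _ => alt_partial_sum _ (by positivity) n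
  rw [Finset.sum_congr rfl this, ← Nat.cast_sum, ← binaryOnes_eq_sum K n h2]
end

section
/- Let F be the formal power series over ℤ whose n-th coefficient is e₁(n), and let G be the formal power series whose n-th coefficient is e₁(n/2) if n is even and 0 if n is odd (so G represents F(X²)). Then (1 - X²)·G - (1 - X)·F = -X·(1 + X)⁻¹. -/
open PowerSeries

lemma binaryOnes_two_mul (m : ℕ) : binaryOnes (2 * m) = binaryOnes m := by
  rcases Nat.eq_zero_or_pos m with h | h
  · simp [h]
  · unfold binaryOnes
    rw [Nat.digits_def' (by norm_num) (by omega)]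
    simp [Nat.mul_div_cancel_left _ (by norm_num : 0 < 2), Nat.mul_mod_right]

lemma binaryOnes_two_mul_add_one (m : ℕ) :
    binaryOnes (2 * m + 1) = binaryOnes m + 1 := by
  unfold binaryOnes
  rw [Nat.digits_def' (by norm_num) (by omega)]
  have h1 : (2 * m + 1) % 2 = 1 := by omega
  have h2 : (2 * m + 1) / 2 = m := by omega
  rw [h1, h2]
  simp

/-- Let `F` be the power series over `ℤ` with `n`-th coefficient
`e₁ n`, and `G` the power series with `n`-th coefficient `e₁ (n/2)` if `n` is even
and `0` otherwise (so `G` represents `F(X²)`). Then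
`(1 - X²)·G - (1 - X)·F = -X·(1 + X)⁻¹`, the inverse being `invOfUnit _ 1`. -/
theorem stmt_10 :
    (1 - (PowerSeries.X : PowerSeries ℤ) ^ 2) *
        PowerSeries.mk (fun n => if Even n then (binaryOnes (n / 2) : ℤ) else 0) -
      (1 - (PowerSeries.X : PowerSeries ℤ)) *
        PowerSeries.mk (fun n => (binaryOnes n : ℤ))
    = -PowerSeries.X * PowerSeries.invOfUnit (1 + (PowerSeries.X : PowerSeries ℤ)) 1 := by
  set G : PowerSeries ℤ :=
    PowerSeries.mk (fun n => if Even n then (binaryOnes (n / 2) : ℤ) else 0) with hG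
  set F : PowerSeries ℤ := PowerSeries.mk (fun n => (binaryOnes n : ℤ)) with hF
  set A : PowerSeries ℤ := (1 - X ^ 2) * G - (1 - X) * F with hA
  have hc : constantCoeff (1 + (X : PowerSeries ℤ)) = ((1 : ℤˣ) : ℤ) := by simp
  have hinv : (1 + (X : PowerSeries ℤ)) * invOfUnit (1 + X) 1 = 1 :=
    PowerSeries.mul_invOfUnit _ _ hc
  have H_eq : (1 + X) * G - F =
      PowerSeries.mk (fun n => if Even n then 0 else (-1 : ℤ)) := by
    have hsplit : (1 + X) * G = G + X * G := by ring
    ext n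
    rw [map_sub, hsplit, map_add]
    rcases n with _ | n
    · simp [hG, hF, binaryOnes]
    · rw [PowerSeries.coeff_succ_X_mul]
      simp only [hG, hF, PowerSeries.coeff_mk]
      rcases Nat.even_or_odd (n + 1) with he | ho
      · obtain ⟨m, hm⟩ := he
        have he' : Even (n + 1) := ⟨m, hm⟩
        have hne : ¬ Even n := Nat.even_add_one.mp he'
        have h1 : (n + 1) / 2 = m := by omega
        have h2 : n + 1 = 2 * m := by omega
        simp [he', hne, h1, h2, binaryOnes_two_mul]
      · obtain ⟨m, hm⟩ := ho
        have hne : Even n := ⟨m, by omega⟩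
        have hno : ¬ Even (n + 1) := by
          rw [Nat.even_add_one]; simpa using hne
        have h1 : n / 2 = m := by omega
        have h2 : n + 1 = 2 * m + 1 := by omega
        simp [hno, hne, h1, h2, binaryOnes_two_mul_add_one]
  have key : A * (1 + X) = -X := by
    have h1 : A * (1 + X) = (1 - X ^ 2) * ((1 + X) * G - F) := by
      rw [hA]; ring
    rw [h1, H_eq]
    set H := PowerSeries.mk (fun n => if Even n then 0 else (-1 : ℤ)) with hH
    have hsplit : (1 - X ^ 2) * H = H - X * (X * H) := by ring
    rw [hsplit]
    ext n
    rw [map_sub]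
    rcases n with _ | n
    · simp [hH]
    · rw [PowerSeries.coeff_succ_X_mul]
      rcases n with _ | n
      · simp [hH]
      · rw [PowerSeries.coeff_succ_X_mul]
        simp only [hH, PowerSeries.coeff_mk]
        rcases Nat.even_or_odd n with he | ho
        · have h2 : Even (n + 2) := by
            obtain ⟨k, hk⟩ := he; exact ⟨k + 1, by omega⟩
          simp [he, h2, PowerSeries.coeff_X]
        · have hne : ¬ Even n := Nat.not_even_iff_odd.mpr ho
          have h2 : ¬ Even (n + 2) := fun ⟨k, hk⟩ => hne ⟨k - 1, by omega⟩
          simp [hne, h2, PowerSeries.coeff_X]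
  calc A = A * ((1 + X) * invOfUnit (1 + X) 1) := by rw [hinv, mul_one]
    _ = (A * (1 + X)) * invOfUnit (1 + X) 1 := by ring
    _ = -X * invOfUnit (1 + X) 1 := by rw [key]
end

section
/- Let c and c₁, …, c_D be integers. Define a : ℕ → ℤ by a(0) = 1, a(2n) = a(n) + ∑_{1 ≤ i ≤ D, i ≤ n} c_i·a(n-i) for n ≥ 1, and a(2n+1) = c·a(n) for n ≥ 0 (terms a(n-i) with n - i < 0 are taken to be 0). Then for all natural numbers K, n with n < 2^K, the coefficient of X^n in ∏_{k=0}^{K-1} (1 + c·X^{2^k} + ∑_{i=1}^{D} c_i·X^{2^{k+1}·i}) over ℤ equals a(n). -/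
open Polynomial Finset

/-- The k-th factor, as a polynomial over ℤ. -/
noncomputable def stmt13Pk (D : ℕ) (c : ℤ) (cs : ℕ → ℤ) (k : ℕ) : Polynomial ℤ :=
  1 + C c * X ^ (2 ^ k) + ∑ i ∈ Icc 1 D, C (cs i) * X ^ (2 ^ (k + 1) * i)

lemma stmt13Pk_succ (D : ℕ) (c : ℤ) (cs : ℕ → ℤ) (k : ℕ) :
    stmt13Pk D c cs (k + 1) = expand ℤ 2 (stmt13Pk D c cs k) := by
  have hx : ∀ m : ℕ, expand ℤ 2 (X ^ m : Polynomial ℤ) = X ^ (2 * m) := by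
    intro m; rw [map_pow, expand_X, ← pow_mul, mul_comm]
  simp only [stmt13Pk, map_add, map_one, map_mul, expand_C, hx]
  congr 1
  · congr 2
    ring
  · rw [map_sum]
    refine Finset.sum_congr rfl fun i _ => ?_
    rw [map_mul, expand_C, hx]
    congr 2
    ring

/-- Let `c` and `c₁, …, c_D` be integers. Define `a : ℕ → ℤ` by
`a 0 = 1`, `a (2n) = a n + ∑_{1 ≤ i ≤ D, i ≤ n} cᵢ · a (n - i)` for `n ≥ 1`
(terms with `n - i < 0` are taken to be `0`), and `a (2n+1) = c · a n` for `n ≥ 0`.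
Then for all `K, n` with `n < 2^K`, the coefficient of `X^n` in
`∏_{k=0}^{K-1} (1 + c·X^(2^k) + ∑_{i=1}^{D} cᵢ·X^(2^(k+1)·i))` over `ℤ` equals `a n`. -/
theorem stmt_13 (D : ℕ) (c : ℤ) (cs : ℕ → ℤ) (a : ℕ → ℤ)
    (ha0 : a 0 = 1)
    (haEven : ∀ n : ℕ, 1 ≤ n →
      a (2 * n) = a n + ∑ i ∈ Finset.Icc 1 D, if i ≤ n then cs i * a (n - i) else 0)
    (haOdd : ∀ n : ℕ, a (2 * n + 1) = c * a n) :
    ∀ K n : ℕ, n < 2 ^ K →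
      PowerSeries.coeff (R := ℤ) n
        (∏ k ∈ Finset.range K,
          (1 + PowerSeries.C (R := ℤ) c * (PowerSeries.X : PowerSeries ℤ) ^ (2 ^ k) +
            ∑ i ∈ Finset.Icc 1 D,
              PowerSeries.C (R := ℤ) (cs i) * (PowerSeries.X : PowerSeries ℤ) ^ (2 ^ (k + 1) * i)))
      = a n := by
  have key : ∀ K n : ℕ, n < 2 ^ K → (∏ k ∈ Finset.range K, stmt13Pk D c cs k).coeff n = a n := by
    intro K
    induction K with
    | zero =>
      intro n hn
      interval_cases n
      simp [ha0]
    | succ K ih =>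
      intro n hn
      rw [Finset.prod_range_succ']
      set F := ∏ k ∈ Finset.range K, stmt13Pk D c cs k with hF
      have hGF : ∏ k ∈ Finset.range K, stmt13Pk D c cs (k + 1) = expand ℤ 2 F := by
        rw [hF, map_prod]
        exact Finset.prod_congr rfl fun k _ => stmt13Pk_succ D c cs k
      rw [hGF]
      set G := expand ℤ 2 F with hG
      have hGc : ∀ m : ℕ, G.coeff m = if 2 ∣ m then F.coeff (m / 2) else 0 := by
        intro m; rw [hG, Polynomial.coeff_expand (by norm_num)]
      have hP0 : stmt13Pk D c cs 0 = 1 + C c * X ^ (1:ℕ) + ∑ i ∈ Icc 1 D, C (cs i) * X ^ (2 * i) := by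
        simp [stmt13Pk]
      have hmul : (G * stmt13Pk D c cs 0).coeff n =
          G.coeff n + c * (if 1 ≤ n then G.coeff (n - 1) else 0) +
          ∑ i ∈ Finset.Icc 1 D, cs i * (if 2 * i ≤ n then G.coeff (n - 2 * i) else 0) := by
        rw [hP0, mul_add, mul_add, mul_one, coeff_add, coeff_add]
        congr 1
        · congr 1
          rw [show G * (C c * X ^ (1:ℕ)) = C c * (G * X ^ (1:ℕ)) by ring,
            coeff_C_mul, coeff_mul_X_pow']
        · rw [Finset.mul_sum, finset_sum_coeff]
          apply Finset.sum_congr rfl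
          intro i _
          rw [show G * (C (cs i) * X ^ (2 * i)) = C (cs i) * (G * X ^ (2 * i)) by ring,
            coeff_C_mul, coeff_mul_X_pow']
      rw [hmul]
      rcases Nat.even_or_odd n with ⟨m, hm⟩ | ⟨m, hm⟩
      · -- n = 2m
        subst hm
        have hm2 : m < 2 ^ K := by
          have : 2 * m < 2 * 2 ^ K := by
            calc 2 * m = m + m := by ring
            _ < 2 ^ (K + 1) := hn
            _ = 2 * 2 ^ K := by ring
          omega
        have hGn : G.coeff (m + m) = a m := by
          rw [hGc]
          have : (2 : ℕ) ∣ (m + m) := ⟨m, by ring⟩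
          rw [if_pos this, show (m + m) / 2 = m by omega, ih m hm2]
        have hGodd : (if 1 ≤ m + m then G.coeff (m + m - 1) else 0) = 0 := by
          rcases Nat.eq_zero_or_pos m with h | h
          · simp [h]
          · rw [if_pos (by omega), hGc, if_neg (by omega)]
        rw [hGn, hGodd, mul_zero]
        have hsum : ∑ i ∈ Finset.Icc 1 D, cs i * (if 2 * i ≤ m + m then G.coeff (m + m - 2 * i) else 0)
            = ∑ i ∈ Finset.Icc 1 D, (if i ≤ m then cs i * a (m - i) else 0) := by
          apply Finset.sum_congr rfl
          intro i hi
          by_cases h : i ≤ m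
          · rw [if_pos (by omega), if_pos h, hGc, if_pos ⟨m - i, by omega⟩,
              show (m + m - 2 * i) / 2 = m - i by omega, ih (m - i) (by omega)]
          · rw [if_neg (by omega), if_neg h, mul_zero]
        rw [hsum]
        rcases Nat.eq_zero_or_pos m with h | h
        · subst h
          have : ∑ i ∈ Finset.Icc 1 D, (if i ≤ 0 then cs i * a (0 - i) else 0) = 0 := by
            apply Finset.sum_eq_zero
            intro i hi
            rw [if_neg (by simp at hi; omega)]
          rw [this]
          simp
        · rw [show m + m = 2 * m by ring] at *
          rw [haEven m h]
          ring
      · -- n = 2m + 1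
        subst hm
        have hm2 : m < 2 ^ K := by
          have : 2 ^ (K + 1) = 2 * 2 ^ K := by ring
          omega
        have hGn : G.coeff (2 * m + 1) = 0 := by
          rw [hGc, if_neg (by omega)]
        have hGe : (if 1 ≤ 2 * m + 1 then G.coeff (2 * m + 1 - 1) else 0) = a m := by
          rw [if_pos (by omega), show 2 * m + 1 - 1 = 2 * m by omega, hGc,
            if_pos ⟨m, rfl⟩, Nat.mul_div_cancel_left m (by norm_num), ih m hm2]
        have hsum : ∑ i ∈ Finset.Icc 1 D, cs i * (if 2 * i ≤ 2 * m + 1 then G.coeff (2 * m + 1 - 2 * i) else 0) = 0 := by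
          apply Finset.sum_eq_zero
          intro i hi
          by_cases h : 2 * i ≤ 2 * m + 1
          · rw [if_pos h, hGc, if_neg (by omega), mul_zero]
          · rw [if_neg h, mul_zero]
        rw [hGn, hGe, hsum, haOdd m]
        ring
  intro K n hn
  have hcoe : (∏ k ∈ Finset.range K,
      (1 + PowerSeries.C (R := ℤ) c * (PowerSeries.X : PowerSeries ℤ) ^ (2 ^ k) +
        ∑ i ∈ Finset.Icc 1 D,
          PowerSeries.C (R := ℤ) (cs i) * (PowerSeries.X : PowerSeries ℤ) ^ (2 ^ (k + 1) * i)))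
      = ((∏ k ∈ Finset.range K, stmt13Pk D c cs k : Polynomial ℤ) : PowerSeries ℤ) := by
    rw [show ((∏ k ∈ Finset.range K, stmt13Pk D c cs k : Polynomial ℤ) : PowerSeries ℤ)
        = Polynomial.coeToPowerSeries.ringHom (∏ k ∈ Finset.range K, stmt13Pk D c cs k) from rfl,
      map_prod]
    apply Finset.prod_congr rfl
    intro k _
    rw [show (Polynomial.coeToPowerSeries.ringHom (stmt13Pk D c cs k) : PowerSeries ℤ)
        = ((stmt13Pk D c cs k : Polynomial ℤ) : PowerSeries ℤ) from rfl]
    simp only [stmt13Pk, Polynomial.coe_add, Polynomial.coe_one, Polynomial.coe_mul,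
      Polynomial.coe_pow, Polynomial.coe_C, Polynomial.coe_X]
    congr 1
    rw [show ((∑ i ∈ Icc 1 D, C (cs i) * X ^ (2 ^ (k + 1) * i) : Polynomial ℤ) : PowerSeries ℤ)
        = Polynomial.coeToPowerSeries.ringHom (∑ i ∈ Icc 1 D, C (cs i) * X ^ (2 ^ (k + 1) * i)) from rfl,
      map_sum]
    apply Finset.sum_congr rfl
    intro i _
    rw [show (Polynomial.coeToPowerSeries.ringHom (C (cs i) * X ^ (2 ^ (k + 1) * i) : Polynomial ℤ) : PowerSeries ℤ)
        = ((C (cs i) * X ^ (2 ^ (k + 1) * i) : Polynomial ℤ) : PowerSeries ℤ) from rfl]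
    simp only [Polynomial.coe_mul, Polynomial.coe_pow, Polynomial.coe_C, Polynomial.coe_X]
  rw [hcoe, Polynomial.coeff_coe]
  exact key K n hn
end

section
/- Let c₁, …, c_D be integers and let b : ℕ → ℤ be defined by b(0) = 1 and b(n) = ∑_{1 ≤ i ≤ D, i ≤ n} c_i·b(n-i) for n ≥ 1. Then for all natural numbers K, n with 1 ≤ n < 2^K, the coefficient of X^n in the formal power series ∑_{k=0}^{K-1} (1 - ∑_{i=1}^{D} c_i·X^{2^k·i})⁻¹ over ℤ equals ∑_{j=0}^{v₂(n)} b(n / 2^j). -/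
open PowerSeries Finset

lemma aux14 (D : ℕ) (cs : ℕ → ℤ) (b : ℕ → ℤ)
    (hb0 : b 0 = 1)
    (hb : ∀ n : ℕ, 1 ≤ n →
      b n = ∑ i ∈ Finset.Icc 1 D, if i ≤ n then cs i * b (n - i) else 0)
    (k : ℕ) :
    PowerSeries.invOfUnit
      (1 - ∑ i ∈ Finset.Icc 1 D,
        PowerSeries.C (R := ℤ) (cs i) * (PowerSeries.X : PowerSeries ℤ) ^ (2 ^ k * i)) 1
    = PowerSeries.mk (fun n => if 2 ^ k ∣ n then b (n / 2 ^ k) else 0) := by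
  have hpos : 0 < 2 ^ k := Nat.pow_pos (by norm_num)
  set S : PowerSeries ℤ := ∑ i ∈ Finset.Icc 1 D,
      PowerSeries.C (R := ℤ) (cs i) * (PowerSeries.X : PowerSeries ℤ) ^ (2 ^ k * i) with hS
  set g : PowerSeries ℤ := PowerSeries.mk (fun n => if 2 ^ k ∣ n then b (n / 2 ^ k) else 0)
    with hg
  have hcc : constantCoeff (R := ℤ) (1 - S) = ((1 : ℤˣ) : ℤ) := by
    rw [map_sub, map_one, hS, map_sum]
    rw [Finset.sum_eq_zero (fun i hi => ?_)]
    · simp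
    · have hne : 2 ^ k * i ≠ 0 := by
        have := (Finset.mem_Icc.mp hi).1
        positivity
      rw [map_mul, constantCoeff_C, map_pow, constantCoeff_X, zero_pow hne, mul_zero]
  have hmul : (1 - S) * g = 1 := by
    ext n
    rw [sub_mul, one_mul, map_sub]
    have hSg : (coeff (R := ℤ) n) (S * g) = ∑ i ∈ Finset.Icc 1 D,
        (if 2 ^ k * i ≤ n then cs i * coeff (R := ℤ) (n - 2 ^ k * i) g else 0) := by
      rw [hS, Finset.sum_mul, map_sum]
      refine Finset.sum_congr rfl fun i _ => ?_
      have : PowerSeries.C (R := ℤ) (cs i) * X ^ (2 ^ k * i) * g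
          = PowerSeries.C (R := ℤ) (cs i) * (g * X ^ (2 ^ k * i)) := by ring
      rw [this, PowerSeries.coeff_C_mul, PowerSeries.coeff_mul_X_pow', mul_ite, mul_zero]
    rw [hSg]
    rcases Nat.eq_zero_or_pos n with rfl | hn
    · rw [Finset.sum_eq_zero (fun i hi => ?_)]
      · simp [hg, hb0]
      · have h1 := (Finset.mem_Icc.mp hi).1
        have hlt : 0 < 2 ^ k * i := Nat.mul_pos hpos h1
        rw [if_neg (by omega)]
    · rw [PowerSeries.coeff_one, if_neg hn.ne']
      by_cases hd : 2 ^ k ∣ n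
      · obtain ⟨m, rfl⟩ := hd
        have hm : 1 ≤ m := by
          rcases Nat.eq_zero_or_pos m with rfl | h; · simp at hn
          exact h
        have hL : (coeff (R := ℤ) (2 ^ k * m)) g = b m := by
          simp [hg, Nat.mul_div_cancel_left _ hpos, dvd_mul_right]
        rw [hL, hb m hm, sub_eq_zero]
        refine Finset.sum_congr rfl fun i _ => ?_
        have hle : 2 ^ k * i ≤ 2 ^ k * m ↔ i ≤ m :=
          ⟨fun h2 => Nat.le_of_mul_le_mul_left h2 hpos, fun h2 => Nat.mul_le_mul_left _ h2⟩
        by_cases hi : i ≤ m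
        · rw [if_pos (hle.mpr hi), if_pos hi, ← Nat.mul_sub]
          congr 1
          simp [hg, Nat.mul_div_cancel_left _ hpos, dvd_mul_right]
        · rw [if_neg (fun h2 => hi (hle.mp h2)), if_neg hi]
      · rw [Finset.sum_eq_zero (fun i hi => ?_), sub_zero]
        · simp only [hg, coeff_mk]
          rw [if_neg hd]
        · split_ifs with h
          · have hnd : ¬ 2 ^ k ∣ (n - 2 ^ k * i) := by
              intro hdd
              apply hd
              have heq : (n - 2 ^ k * i) + 2 ^ k * i = n := Nat.sub_add_cancel h
              rw [← heq]
              exact dvd_add hdd (dvd_mul_right _ _)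
            simp only [hg, coeff_mk]
            rw [if_neg hnd, mul_zero]
          · rfl
  have hinv : (1 - S) * PowerSeries.invOfUnit (1 - S) 1 = 1 :=
    PowerSeries.mul_invOfUnit _ _ hcc
  calc PowerSeries.invOfUnit (1 - S) 1
      = PowerSeries.invOfUnit (1 - S) 1 * ((1 - S) * g) := by rw [hmul, mul_one]
    _ = ((1 - S) * PowerSeries.invOfUnit (1 - S) 1) * g := by ring
    _ = g := by rw [hinv, one_mul]

/-- Let `c₁, …, c_D` be integers and `b : ℕ → ℤ` with `b 0 = 1` and
`b n = ∑_{1 ≤ i ≤ D, i ≤ n} cᵢ · b (n - i)` for `n ≥ 1`. Then for all `K, n` with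
`1 ≤ n < 2^K`, the coefficient of `X^n` in
`∑_{k=0}^{K-1} (1 - ∑_{i=1}^{D} cᵢ·X^(2^k·i))⁻¹` over `ℤ` equals
`∑_{j=0}^{v₂ n} b (n / 2^j)`, where the inverse is `invOfUnit _ 1` and
`v₂ n = padicValNat 2 n`. -/
theorem stmt_14 (D : ℕ) (cs : ℕ → ℤ) (b : ℕ → ℤ)
    (hb0 : b 0 = 1)
    (hb : ∀ n : ℕ, 1 ≤ n →
      b n = ∑ i ∈ Finset.Icc 1 D, if i ≤ n then cs i * b (n - i) else 0) :
    ∀ K n : ℕ, 1 ≤ n → n < 2 ^ K →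
      PowerSeries.coeff (R := ℤ) n
        (∑ k ∈ Finset.range K,
          PowerSeries.invOfUnit
            (1 - ∑ i ∈ Finset.Icc 1 D,
              PowerSeries.C (R := ℤ) (cs i) * (PowerSeries.X : PowerSeries ℤ) ^ (2 ^ k * i)) 1)
      = ∑ j ∈ Finset.range (padicValNat 2 n + 1), b (n / 2 ^ j) := by
  intro K n hn hnK
  have step1 : PowerSeries.coeff (R := ℤ) n
        (∑ k ∈ Finset.range K,
          PowerSeries.invOfUnit
            (1 - ∑ i ∈ Finset.Icc 1 D,
              PowerSeries.C (R := ℤ) (cs i) * (PowerSeries.X : PowerSeries ℤ) ^ (2 ^ k * i)) 1)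
      = ∑ k ∈ Finset.range K, (if 2 ^ k ∣ n then b (n / 2 ^ k) else 0) := by
    rw [map_sum]
    refine Finset.sum_congr rfl fun k _ => ?_
    rw [aux14 D cs b hb0 hb k, PowerSeries.coeff_mk]
  rw [step1]
  set v := padicValNat 2 n with hv
  have hdvd : ∀ k : ℕ, 2 ^ k ∣ n ↔ k ≤ v := fun k =>
    padicValNat_dvd_iff_le (by omega)
  have hvK : v + 1 ≤ K := by
    have h1 : 2 ^ v ∣ n := pow_padicValNat_dvd
    have h2 : 2 ^ v ≤ n := Nat.le_of_dvd (by omega) h1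
    have h3 : (2:ℕ) ^ v < 2 ^ K := lt_of_le_of_lt h2 hnK
    exact Nat.pow_lt_pow_iff_right (by norm_num) |>.mp h3
  rw [← Finset.sum_subset (Finset.range_subset_range.mpr hvK)
    (fun k _ hk => by
      rw [if_neg]
      rw [hdvd k]
      simp only [Finset.mem_range] at hk
      omega)]
  refine Finset.sum_congr rfl fun k hk => ?_
  rw [if_pos ((hdvd k).mpr (by simp only [Finset.mem_range] at hk; omega))]
end
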